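/- arXiv:1808.06258 — 4 statements merged into one kernel-verified Lean document; each statement's English description precedes it below -/
import Mathlib

section
/- If G is a sequent calculus with uniform interpolation (in the sequent sense) which is sound and complete for a logic L extending FL_e, then L has the uniform interpolation property: for every formula A and atom p there exist p-free formulas ∀pA and ∃pA such that L ⊢ ∀pA → A, L ⊢ A → ∃pA, and for every p-free B, L ⊢ B → A implies L ⊢ B → ∀pA, and L ⊢ A → B implies L ⊢ ∃pA → B. -/
inductive Fm : Type where
  | var : Nat → Fm
  | one : Fm
  | zero : Fm
  | top : Fm
  | bot : Fm
  | conj : Fm → Fm → Fm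
  | disj : Fm → Fm → Fm
  | imp : Fm → Fm → Fm
  | fus : Fm → Fm → Fm
  deriving DecidableEq

def Fm.occurs (p : Nat) : Fm → Bool
  | .var q => p == q
  | .one => false
  | .zero => false
  | .top => false
  | .bot => false
  | .conj a b => a.occurs p || b.occurs p
  | .disj a b => a.occurs p || b.occurs p
  | .imp a b => a.occurs p || b.occurs p
  | .fus a b => a.occurs p || b.occurs p

/-- A formula is `p`-free if the atom `p` does not occur in it. -/
def pFree (p : Nat) (φ : Fm) : Prop := φ.occurs p = false

/-- The fusion of all members of a multiset (`⊛Γ`), with `⊛∅ = 1`. -/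
noncomputable def bigFus (Γ : Multiset Fm) : Fm := Γ.toList.foldr Fm.fus Fm.one

/-- The formula interpretation of a single-conclusion succedent: `Δ` itself if
it is a singleton, and `0` if it is empty. -/
def succFm : Option Fm → Fm
  | none => Fm.zero
  | some φ => φ

/-- The single-conclusion sequent calculus `FL_e` (commutative Full Lambek calculus). -/
inductive FLe : Multiset Fm → Option Fm → Prop where
  | idAx (φ) : FLe {φ} (some φ)
  | topAx (Γ) : FLe Γ (some Fm.top)
  | botAx (Γ Δ) : FLe (Fm.bot ::ₘ Γ) Δ
  | oneRAx : FLe 0 (some Fm.one)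
  | zeroLAx : FLe {Fm.zero} none
  | oneL (Γ Δ) : FLe Γ Δ → FLe (Fm.one ::ₘ Γ) Δ
  | zeroR (Γ) : FLe Γ none → FLe Γ (some Fm.zero)
  | conjL₁ (Γ Δ φ ψ) : FLe (φ ::ₘ Γ) Δ → FLe (Fm.conj φ ψ ::ₘ Γ) Δ
  | conjL₂ (Γ Δ φ ψ) : FLe (ψ ::ₘ Γ) Δ → FLe (Fm.conj φ ψ ::ₘ Γ) Δ
  | conjR (Γ φ ψ) : FLe Γ (some φ) → FLe Γ (some ψ) → FLe Γ (some (Fm.conj φ ψ))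
  | disjL (Γ Δ φ ψ) : FLe (φ ::ₘ Γ) Δ → FLe (ψ ::ₘ Γ) Δ → FLe (Fm.disj φ ψ ::ₘ Γ) Δ
  | disjR₁ (Γ φ ψ) : FLe Γ (some φ) → FLe Γ (some (Fm.disj φ ψ))
  | disjR₂ (Γ φ ψ) : FLe Γ (some ψ) → FLe Γ (some (Fm.disj φ ψ))
  | fusL (Γ Δ φ ψ) : FLe (φ ::ₘ ψ ::ₘ Γ) Δ → FLe (Fm.fus φ ψ ::ₘ Γ) Δ
  | fusR (Γ Θ φ ψ) : FLe Γ (some φ) → FLe Θ (some ψ) → FLe (Γ + Θ) (some (Fm.fus φ ψ))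
  | impL (Γ Θ Δ φ ψ) : FLe Γ (some φ) → FLe (ψ ::ₘ Θ) Δ → FLe (Fm.imp φ ψ ::ₘ (Γ + Θ)) Δ
  | impR (Γ φ ψ) : FLe (φ ::ₘ Γ) (some ψ) → FLe Γ (some (Fm.imp φ ψ))


lemma bigFus_singleton (B : Fm) : bigFus {B} = Fm.fus B Fm.one := by
  simp [bigFus]

lemma fle_curry (X Y : Fm) :
    FLe 0 (some (Fm.imp (Fm.imp X Y) (Fm.imp (Fm.fus X Fm.one) Y))) := by
  apply FLe.impR
  apply FLe.impR
  apply FLe.fusL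
  have h : (X ::ₘ Fm.one ::ₘ Fm.imp X Y ::ₘ (0 : Multiset Fm))
      = Fm.imp X Y ::ₘ (({X} : Multiset Fm) + {Fm.one}) := by
    rw [Multiset.singleton_add]
    rw [Multiset.cons_swap Fm.one (Fm.imp X Y)]
    rw [Multiset.cons_swap X (Fm.imp X Y)]
    rfl
  rw [h]
  apply FLe.impL
  · exact FLe.idAx X
  · have h2 : (Y ::ₘ ({Fm.one} : Multiset Fm)) = Fm.one ::ₘ ({Y} : Multiset Fm) :=
      Multiset.cons_swap Y Fm.one 0
    rw [h2]
    exact FLe.oneL _ _ (FLe.idAx Y)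

lemma fle_uncurry (X Y : Fm) :
    FLe 0 (some (Fm.imp (Fm.imp (Fm.fus X Fm.one) Y) (Fm.imp X Y))) := by
  apply FLe.impR
  apply FLe.impR
  have h : (X ::ₘ Fm.imp (Fm.fus X Fm.one) Y ::ₘ (0 : Multiset Fm))
      = Fm.imp (Fm.fus X Fm.one) Y ::ₘ (({X} : Multiset Fm) + 0) := by
    rw [add_zero]
    exact Multiset.cons_swap X _ 0
  rw [h]
  apply FLe.impL
  · have := FLe.fusR {X} 0 X Fm.one (FLe.idAx X) FLe.oneRAx
    rwa [add_zero] at this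
  · exact FLe.idAx Y

/-- If `G` is a sequent calculus with uniform interpolation (in
the sequent sense) which is sound and complete for a logic `L` extending
`FL_e`, then `L` has the uniform interpolation property. -/
theorem logic_uniform_interpolation_of_calculus_uniform_interpolation
    (L : Fm → Prop)
    (Lmp : ∀ A B : Fm, L (Fm.imp A B) → L A → L B)
    (Lext : ∀ A : Fm, FLe 0 (some A) → L A)
    (G : Multiset Fm → Option Fm → Prop)
    (Gfor : ∀ (Γ : Multiset Fm) (Δ : Option Fm),
      G Γ Δ ↔ L (Fm.imp (bigFus Γ) (succFm Δ)))
    -- left interpolants: for every sequent `S = (Γs ⇒ Δs)` and atom `p` there is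
    -- a `p`-free `I(S)` with (i) `S·(I(S) ⇒)` derivable and (ii) the universal property
    (hIuip : ∀ (Γs : Multiset Fm) (Δs : Option Fm) (p : Nat),
      ∃ I : Fm, pFree p I ∧ G (I ::ₘ Γs) Δs ∧
        ∀ Γ : Multiset Fm, (∀ C ∈ Γ, pFree p C) → G (Γ + Γs) Δs → G Γ (some I))
    -- right interpolants: for every sequent `T = (Ps ⇒)` with empty succedent
    -- and atom `p` there is a `p`-free `J(T)` with (iii) and (iv)
    (hJuip : ∀ (Ps : Multiset Fm) (p : Nat),
      ∃ J : Fm, pFree p J ∧ G Ps (some J) ∧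
        ∀ (Γ : Multiset Fm) (Δ : Option Fm), (∀ C ∈ Γ, pFree p C) →
          (∀ d ∈ Δ, pFree p d) → G (Γ + Ps) Δ → G (J ::ₘ Γ) Δ) :
    ∀ (A : Fm) (p : Nat), ∃ Af Ae : Fm, pFree p Af ∧ pFree p Ae ∧
      L (Fm.imp Af A) ∧ L (Fm.imp A Ae) ∧
      (∀ B : Fm, pFree p B → L (Fm.imp B A) → L (Fm.imp B Af)) ∧
      (∀ B : Fm, pFree p B → L (Fm.imp A B) → L (Fm.imp Ae B)) := by
  intro A p
  obtain ⟨I, hIf, hI1, hI2⟩ := hIuip 0 (some A) p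
  obtain ⟨J, hJf, hJ1, hJ2⟩ := hJuip {A} p
  have toL : ∀ (Γ : Multiset Fm) (Δ : Option Fm), G Γ Δ → L (Fm.imp (bigFus Γ) (succFm Δ)) :=
    fun Γ Δ h => (Gfor Γ Δ).mp h
  have ofL : ∀ (Γ : Multiset Fm) (Δ : Option Fm), L (Fm.imp (bigFus Γ) (succFm Δ)) → G Γ Δ :=
    fun Γ Δ h => (Gfor Γ Δ).mpr h
  have unc : ∀ X Y : Fm, L (Fm.imp (Fm.fus X Fm.one) Y) → L (Fm.imp X Y) :=
    fun X Y h => Lmp _ _ (Lext _ (fle_uncurry X Y)) h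
  have cur : ∀ X Y : Fm, L (Fm.imp X Y) → L (Fm.imp (Fm.fus X Fm.one) Y) :=
    fun X Y h => Lmp _ _ (Lext _ (fle_curry X Y)) h
  refine ⟨I, J, hIf, hJf, ?_, ?_, ?_, ?_⟩
  · have := toL _ _ hI1
    rw [show (I ::ₘ (0 : Multiset Fm)) = ({I} : Multiset Fm) from rfl, bigFus_singleton] at this
    exact unc I A this
  · have := toL _ _ hJ1
    rw [bigFus_singleton] at this
    exact unc A J this
  · intro B hBf hBA
    have h1 : G ({B} : Multiset Fm) (some A) := by
      apply ofL
      rw [bigFus_singleton]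
      exact cur B A hBA
    have h2 : G (({B} : Multiset Fm) + 0) (some A) := by rwa [add_zero]
    have h3 := hI2 {B} (by intro C hC; rw [Multiset.mem_singleton] at hC; subst hC; exact hBf) h2
    have h4 := toL _ _ h3
    rw [bigFus_singleton] at h4
    exact unc B I h4
  · intro B hBf hAB
    have h1 : G (0 + ({A} : Multiset Fm)) (some B) := by
      rw [zero_add]
      apply ofL
      rw [bigFus_singleton]
      exact cur A B hAB
    have h3 := hJ2 0 (some B) (by intro C hC; simp at hC)
      (by intro d hd; simp at hd; subst hd; exact hBf) h1
    have h4 := toL _ _ h3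
    rw [show (J ::ₘ (0 : Multiset Fm)) = ({J} : Multiset Fm) from rfl, bigFus_singleton] at h4
    exact unc J B h4
end

section
/- Let G be a sequent calculus consisting only of the identity axiom φ ⇒ φ and context-free left axioms of the form β̄ ⇒ (where any two formulas in β̄ have the same variables), and let H be any calculus extending FL_e in which every G-provable sequent is H-provable. Then for any sequent T = (Π ⇒) and any atom p, the formula ∃pT := (⊛Π_p) * ⊤ ∧ 0 (with ⊤ present iff Π ≠ Π_p, and 0 present iff Π ⇒ is an instance of a left axiom with β̄ = Π, where Π_p is the multiset of p-free members of Π) satisfies: (a) H ⊢ Π ⇒ ∃pT, and (b) for all p-free multisets C̄, D̄, if G ⊢ Π, C̄ ⇒ D̄ then H ⊢ ∃pT, C̄ ⇒ D̄. -/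
def Fm.vars : Fm → Finset Nat
  | .var q => {q}
  | .one => ∅
  | .zero => ∅
  | .top => ∅
  | .bot => ∅
  | .conj a b => a.vars ∪ b.vars
  | .disj a b => a.vars ∪ b.vars
  | .imp a b => a.vars ∪ b.vars
  | .fus a b => a.vars ∪ b.vars

/-- A single-conclusion sequent calculus (given by its derivability relation)
extends `FL_e` when it is closed under all rules and axioms of `FL_e`. -/
structure IsFLe (H : Multiset Fm → Option Fm → Prop) : Prop where
  idAx : ∀ φ, H {φ} (some φ)
  topAx : ∀ Γ, H Γ (some Fm.top)
  botAx : ∀ Γ Δ, H (Fm.bot ::ₘ Γ) Δ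
  oneRAx : H 0 (some Fm.one)
  zeroLAx : H {Fm.zero} none
  oneL : ∀ Γ Δ, H Γ Δ → H (Fm.one ::ₘ Γ) Δ
  zeroR : ∀ Γ, H Γ none → H Γ (some Fm.zero)
  conjL₁ : ∀ Γ Δ φ ψ, H (φ ::ₘ Γ) Δ → H (Fm.conj φ ψ ::ₘ Γ) Δ
  conjL₂ : ∀ Γ Δ φ ψ, H (ψ ::ₘ Γ) Δ → H (Fm.conj φ ψ ::ₘ Γ) Δ
  conjR : ∀ Γ φ ψ, H Γ (some φ) → H Γ (some ψ) → H Γ (some (Fm.conj φ ψ))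
  disjL : ∀ Γ Δ φ ψ, H (φ ::ₘ Γ) Δ → H (ψ ::ₘ Γ) Δ → H (Fm.disj φ ψ ::ₘ Γ) Δ
  disjR₁ : ∀ Γ φ ψ, H Γ (some φ) → H Γ (some (Fm.disj φ ψ))
  disjR₂ : ∀ Γ φ ψ, H Γ (some ψ) → H Γ (some (Fm.disj φ ψ))
  fusL : ∀ Γ Δ φ ψ, H (φ ::ₘ ψ ::ₘ Γ) Δ → H (Fm.fus φ ψ ::ₘ Γ) Δ
  fusR : ∀ Γ Θ φ ψ, H Γ (some φ) → H Θ (some ψ) → H (Γ + Θ) (some (Fm.fus φ ψ))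
  impL : ∀ Γ Θ Δ φ ψ, H Γ (some φ) → H (ψ ::ₘ Θ) Δ → H (Fm.imp φ ψ ::ₘ (Γ + Θ)) Δ
  impR : ∀ Γ φ ψ, H (φ ::ₘ Γ) (some ψ) → H Γ (some (Fm.imp φ ψ))

/-- The calculus `G` consisting only of the identity axiom `φ ⇒ φ` and the
context-free left axioms `β̄ ⇒` for `β̄ ∈ Axs`. -/
def GPrv (Axs : Set (Multiset Fm)) (Γ : Multiset Fm) (Δ : Option Fm) : Prop :=
  (∃ φ : Fm, Γ = {φ} ∧ Δ = some φ) ∨ (Γ ∈ Axs ∧ Δ = none)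

open scoped Classical

lemma occurs_iff_mem_vars (p : Nat) (φ : Fm) : φ.occurs p = true ↔ p ∈ φ.vars := by
  induction φ <;> simp [Fm.occurs, Fm.vars, *]

lemma H_bigFus_list {H : Multiset Fm → Option Fm → Prop} (hH : IsFLe H) :
    ∀ l : List Fm, H (↑l) (some (l.foldr Fm.fus Fm.one)) := by
  intro l
  induction l with
  | nil => exact hH.oneRAx
  | cons a l ih =>
    have := hH.fusR {a} (↑l) a (l.foldr Fm.fus Fm.one) (hH.idAx a) ih
    simpa using this

lemma H_bigFus {H : Multiset Fm → Option Fm → Prop} (hH : IsFLe H) (Γ : Multiset Fm) :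
    H Γ (some (bigFus Γ)) := by
  have := H_bigFus_list hH Γ.toList
  rwa [Multiset.coe_toList] at this

lemma fusL_list {H : Multiset Fm → Option Fm → Prop} (hH : IsFLe H) :
    ∀ (l : List Fm) (Θ : Multiset Fm) (Δ : Option Fm),
      H (↑l + Θ) Δ → H (l.foldr Fm.fus Fm.one ::ₘ Θ) Δ := by
  intro l
  induction l with
  | nil => intro Θ Δ h; exact hH.oneL Θ Δ (by simpa using h)
  | cons a l ih =>
    intro Θ Δ h
    have h1 : H ((↑l : Multiset Fm) + (a ::ₘ Θ)) Δ := by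
      have heq : (↑(a :: l) : Multiset Fm) + Θ = (↑l : Multiset Fm) + (a ::ₘ Θ) := by
        rw [← Multiset.cons_coe, Multiset.cons_add, Multiset.add_cons]
      rwa [heq] at h
    have h2 := ih (a ::ₘ Θ) Δ h1
    have h3 : H (a ::ₘ l.foldr Fm.fus Fm.one ::ₘ Θ) Δ := by
      rwa [Multiset.cons_swap]
    exact hH.fusL Θ Δ a (l.foldr Fm.fus Fm.one) h3

lemma fusL_big {H : Multiset Fm → Option Fm → Prop} (hH : IsFLe H)
    (Γ Θ : Multiset Fm) (Δ : Option Fm) (h : H (Γ + Θ) Δ) :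
    H (bigFus Γ ::ₘ Θ) Δ := by
  refine fusL_list hH Γ.toList Θ Δ ?_
  rwa [Multiset.coe_toList]



/-- The candidate right `p`-interpolant `∃pT := ((⊛Π_p) * ⊤) ∧ 0` of `T = (Π ⇒)`,
with `⊤` present iff `Π ≠ Π_p` and `0` present iff `Π ⇒` is a left axiom, where
`Π_p` is the multiset of `p`-free members of `Π`. -/
noncomputable def ET (Axs : Set (Multiset Fm)) (p : Nat) (Pi : Multiset Fm) : Fm :=
  let Pip : Multiset Fm := Pi.filter (fun ψ => Fm.occurs p ψ = false)
  let base : Fm := if Pip = Pi then bigFus Pip else Fm.fus (bigFus Pip) Fm.top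
  if Pi ∈ Axs then Fm.conj base Fm.zero else base

/-- For the axiom calculus `G` and any `H` extending `FL_e` in
which every `G`-provable sequent is provable, `ET Axs p Π` is a right
`p`-interpolant of `Π ⇒`. -/
theorem right_interpolant_for_axiom_calculus
    (Axs : Set (Multiset Fm))
    (hvars : ∀ β ∈ Axs, ∀ a ∈ β, ∀ b ∈ β, Fm.vars a = Fm.vars b)
    (H : Multiset Fm → Option Fm → Prop) (hH : IsFLe H)
    (hext : ∀ (Γ : Multiset Fm) (Δ : Option Fm), GPrv Axs Γ Δ → H Γ Δ)
    (Pi : Multiset Fm) (p : Nat) :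
    H Pi (some (ET Axs p Pi)) ∧
      ∀ (C : Multiset Fm) (D : Option Fm), (∀ c ∈ C, pFree p c) →
        (∀ d ∈ D, pFree p d) → GPrv Axs (Pi + C) D → H (ET Axs p Pi ::ₘ C) D := by
  classical
  set Pip : Multiset Fm := Pi.filter (fun ψ => Fm.occurs p ψ = false) with hPip
  have hbase : H Pi (some (if Pip = Pi then bigFus Pip else Fm.fus (bigFus Pip) Fm.top)) := by
    split_ifs with heq
    · rw [heq] at *; exact H_bigFus hH Pi
    · have hsplit : Pip + Pi.filter (fun ψ => ¬ (Fm.occurs p ψ = false)) = Pi :=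
        Multiset.filter_add_not _ Pi
      have := hH.fusR Pip (Pi.filter (fun ψ => ¬ (Fm.occurs p ψ = false)))
        (bigFus Pip) Fm.top (H_bigFus hH Pip) (hH.topAx _)
      rwa [hsplit] at this
  have hET : ET Axs p Pi = (if Pi ∈ Axs then
      Fm.conj (if Pip = Pi then bigFus Pip else Fm.fus (bigFus Pip) Fm.top) Fm.zero
      else (if Pip = Pi then bigFus Pip else Fm.fus (bigFus Pip) Fm.top)) := by
    simp only [ET, hPip]
  constructor
  · rw [hET]
    by_cases hax : Pi ∈ Axs
    · rw [if_pos hax]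
      exact hH.conjR Pi _ Fm.zero hbase
        (hH.zeroR Pi (hext Pi none (Or.inr ⟨hax, rfl⟩)))
    · rw [if_neg hax]
      exact hbase
  · intro C D hC hD hG
    rcases hG with ⟨φ, hΓ, hΔ⟩ | ⟨hax, hD0⟩
    · -- identity axiom case
      subst hΔ
      have hφ : pFree p φ := hD φ rfl
      rcases Multiset.empty_or_exists_mem Pi with hPi0 | ⟨a, ha⟩
      · -- Pi = 0, C = {φ}
        have hC1 : C = {φ} := by rw [hPi0, zero_add] at hΓ; exact hΓ
        have hPip0 : Pip = 0 := by rw [hPip, hPi0]; simp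
        have hb : (if Pip = Pi then bigFus Pip else Fm.fus (bigFus Pip) Fm.top) = Fm.one := by
          rw [if_pos (by rw [hPip0, hPi0]), hPip0]
          simp [bigFus]
        rw [hET, hb, hC1]
        split_ifs with hax
        · exact hH.conjL₁ {φ} (some φ) Fm.one Fm.zero (hH.oneL {φ} (some φ) (hH.idAx φ))
        · exact hH.oneL {φ} (some φ) (hH.idAx φ)
      · -- Pi = {φ}, C = 0
        have hcard : Multiset.card Pi + Multiset.card C = 1 := by
          rw [← Multiset.card_add, hΓ]; simp
        have hPic : Multiset.card Pi ≥ 1 := by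
          rcases Multiset.exists_cons_of_mem ha with ⟨t, rfl⟩
          simp
        have hC0 : C = 0 := by
          have : Multiset.card C = 0 := by omega
          exact Multiset.card_eq_zero.mp this
        have hPiφ : Pi = {φ} := by rw [hC0, add_zero] at hΓ; exact hΓ
        have hφfree : Fm.occurs p φ = false := hφ
        have hPipPi : Pip = Pi := by
          rw [hPip]
          refine Multiset.filter_eq_self.mpr ?_
          intro a ha
          rw [hPiφ, Multiset.mem_singleton] at ha
          subst ha; exact hφfree
        have hb : (if Pip = Pi then bigFus Pip else Fm.fus (bigFus Pip) Fm.top)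
            = Fm.fus φ Fm.one := by
          rw [if_pos hPipPi, hPipPi, hPiφ]
          simp [bigFus]
        have hkey : H {Fm.fus φ Fm.one} (some φ) := by
          have h1 : H (Fm.one ::ₘ {φ}) (some φ) := hH.oneL {φ} (some φ) (hH.idAx φ)
          have h2 : H (φ ::ₘ Fm.one ::ₘ 0) (some φ) := by
            rwa [Multiset.cons_swap]
          have := hH.fusL 0 (some φ) φ Fm.one h2
          simpa using this
        rw [hET, hb, hC0]
        split_ifs with hax
        · exact hH.conjL₁ 0 (some φ) (Fm.fus φ Fm.one) Fm.zero (by simpa using hkey)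
        · simpa using hkey
    · -- left axiom case
      subst hD0
      by_cases hC0 : C = 0
      · subst hC0
        rw [add_zero] at hax
        rw [hET, if_pos hax]
        have hz : H (Fm.zero ::ₘ (0 : Multiset Fm)) none := by
          simpa using hH.zeroLAx
        exact hH.conjL₂ 0 none _ Fm.zero hz
      · obtain ⟨c, hc⟩ := Multiset.exists_mem_of_ne_zero hC0
        have hcfree : Fm.occurs p c = false := hC c hc
        have hall : ∀ a ∈ Pi, Fm.occurs p a = false := by
          intro a ha
          have hva : Fm.vars a = Fm.vars c :=
            hvars _ hax a (Multiset.mem_add.mpr (Or.inl ha))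
              c (Multiset.mem_add.mpr (Or.inr hc))
          by_contra hcon
          have : Fm.occurs p a = true := by
            cases h : Fm.occurs p a with
            | false => exact absurd h hcon
            | true => rfl
          have hm : p ∈ Fm.vars a := (occurs_iff_mem_vars p a).mp this
          rw [hva] at hm
          have := (occurs_iff_mem_vars p c).mpr hm
          rw [hcfree] at this
          exact Bool.noConfusion this
        have hPipPi : Pip = Pi := by
          rw [hPip]; exact Multiset.filter_eq_self.mpr hall
        have hPC : H (Pi + C) none := hext _ _ (Or.inr ⟨hax, rfl⟩)
        have hkey : H (bigFus Pi ::ₘ C) none := fusL_big hH Pi C none hPC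
        rw [hET, if_pos hPipPi, hPipPi]
        split_ifs with haxPi
        · exact hH.conjL₁ C none _ Fm.zero hkey
        · exact hkey
end

section
/- Dyckhoff's calculus is terminating: there is a well-founded order on sequents such that for every rule instance, each premise is strictly smaller than the conclusion, where the order is given lexicographically by (weight of the multiset of formulas), with weight of atoms and ⊥ equal 1, w(φ ∧ ψ) = w(φ) + w(ψ) + 2, w(φ ∨ ψ) = w(φ) + w(ψ) + 1, w(φ → ψ) = w(φ) + w(ψ) + 1 — in particular, every backward proof search in Dyckhoff's calculus terminates. -/
inductive IF : Type where
  | var : Nat → IF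
  | bot : IF
  | conj : IF → IF → IF
  | disj : IF → IF → IF
  | imp : IF → IF → IF
  deriving DecidableEq

/-- Dyckhoff's weight function: atoms and `⊥` weigh `1`,
`w(φ ∧ ψ) = w φ + w ψ + 2`, `w(φ ∨ ψ) = w(φ → ψ) = w φ + w ψ + 1`. -/
def w : IF → Nat
  | .var _ => 1
  | .bot => 1
  | .conj a b => w a + w b + 2
  | .disj a b => w a + w b + 1
  | .imp a b => w a + w b + 1

abbrev DSeq := Multiset IF × Option IF

/-- The measure of a sequent: the multiset of the weights of all its formulas. -/
def mea (S : DSeq) : Multiset Nat :=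
  S.1.map w + (S.2.elim 0 fun φ => {w φ})

/-- The Dershowitz-Manna multiset order on `Multiset Nat`. -/
def MLT (M N : Multiset Nat) : Prop :=
  ∃ X Y Z : Multiset Nat, Z ≠ 0 ∧ M = X + Y ∧ N = X + Z ∧ ∀ y ∈ Y, ∃ z ∈ Z, y < z

/-- The premise-conclusion (one-step backward proof search) relation of
Dyckhoff's calculus: `DStep T S` holds when `T` is a premise of a rule
instance with conclusion `S`. -/
inductive DStep : DSeq → DSeq → Prop where
  | andL (Γ Δ φ ψ) : DStep (φ ::ₘ ψ ::ₘ Γ, Δ) (IF.conj φ ψ ::ₘ Γ, Δ)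
  | andR₁ (Γ φ ψ) : DStep (Γ, some φ) (Γ, some (IF.conj φ ψ))
  | andR₂ (Γ φ ψ) : DStep (Γ, some ψ) (Γ, some (IF.conj φ ψ))
  | orL₁ (Γ Δ φ ψ) : DStep (φ ::ₘ Γ, Δ) (IF.disj φ ψ ::ₘ Γ, Δ)
  | orL₂ (Γ Δ φ ψ) : DStep (ψ ::ₘ Γ, Δ) (IF.disj φ ψ ::ₘ Γ, Δ)
  | orR₁ (Γ φ ψ) : DStep (Γ, some φ) (Γ, some (IF.disj φ ψ))
  | orR₂ (Γ φ ψ) : DStep (Γ, some ψ) (Γ, some (IF.disj φ ψ))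
  | impR (Γ φ ψ) : DStep (φ ::ₘ Γ, some ψ) (Γ, some (IF.imp φ ψ))
  | impL1 (Γ Δ n ψ) : DStep (IF.var n ::ₘ ψ ::ₘ Γ, Δ)
      (IF.var n ::ₘ IF.imp (IF.var n) ψ ::ₘ Γ, Δ)
  | impL2 (Γ Δ φ ψ γ) : DStep (IF.imp φ (IF.imp ψ γ) ::ₘ Γ, Δ)
      (IF.imp (IF.conj φ ψ) γ ::ₘ Γ, Δ)
  | impL3 (Γ Δ φ ψ γ) : DStep (IF.imp φ γ ::ₘ IF.imp ψ γ ::ₘ Γ, Δ)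
      (IF.imp (IF.disj φ ψ) γ ::ₘ Γ, Δ)
  | impL4a (Γ Δ φ ψ γ) : DStep (IF.imp ψ γ ::ₘ Γ, some (IF.imp φ ψ))
      (IF.imp (IF.imp φ ψ) γ ::ₘ Γ, Δ)
  | impL4b (Γ Δ φ ψ γ) : DStep (γ ::ₘ Γ, Δ) (IF.imp (IF.imp φ ψ) γ ::ₘ Γ, Δ)

/-!
Every rule replaces one formula of the conclusion by at most two formulas of strictly
smaller weight (and `L4→` may in addition drop the succedent), so each premise is below its
conclusion in the Dershowitz–Manna extension of `<` on `ℕ`, which is well-founded because `<`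
is. For `L2→`, `w(φ → (ψ → γ)) = w φ + w ψ + w γ + 2` is less than
`w((φ ∧ ψ) → γ) = w φ + w ψ + w γ + 3`: this is why conjunction weighs `2` more.
-/

theorem MLT_wf : WellFounded MLT :=
  Multiset.wellFounded_isDershowitzMannaLT

namespace MLT

variable {M N X : Multiset ℕ} {a b z : ℕ}

theorem cons_of_forall_lt {Y : Multiset ℕ} (h : ∀ y ∈ Y, y < z) :
    MLT (Y + X) (z ::ₘ X) :=
  ⟨X, Y, {z}, Multiset.singleton_ne_zero z, add_comm Y X, by rw [add_comm, Multiset.singleton_add],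
    fun y hy => ⟨z, Multiset.mem_singleton_self z, h y hy⟩⟩

theorem cons_of_lt (h : a < z) : MLT (a ::ₘ X) (z ::ₘ X) := by
  simpa using cons_of_forall_lt (X := X) (Y := {a}) (by simpa using h)

theorem cons_cons_of_lt (ha : a < z) (hb : b < z) : MLT (a ::ₘ b ::ₘ X) (z ::ₘ X) := by
  simpa using cons_of_forall_lt (X := X) (Y := {a, b}) (by simp [ha, hb])

theorem cons (h : MLT M N) : MLT (a ::ₘ M) (a ::ₘ N) := by
  obtain ⟨X, Y, Z, hZ, rfl, rfl, hYZ⟩ := h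
  exact ⟨a ::ₘ X, Y, Z, hZ, (Multiset.cons_add a X Y).symm, (Multiset.cons_add a X Z).symm, hYZ⟩

theorem add_right (h : MLT M N) (W : Multiset ℕ) : MLT M (N + W) := by
  obtain ⟨X, Y, Z, hZ, rfl, rfl, hYZ⟩ := h
  refine ⟨X, Y, Z + W, fun h0 => hZ (add_eq_zero.1 h0).1, rfl, add_assoc X Z W, ?_⟩
  intro y hy
  obtain ⟨z, hz, hyz⟩ := hYZ y hy
  exact ⟨z, Multiset.mem_add.2 (Or.inl hz), hyz⟩

end MLT

theorem mea_cons (φ : IF) (Γ : Multiset IF) (Δ : Option IF) :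
    mea (φ ::ₘ Γ, Δ) = w φ ::ₘ mea (Γ, Δ) := by
  simp [mea, Multiset.cons_add]

theorem mea_some (Γ : Multiset IF) (φ : IF) : mea (Γ, some φ) = w φ ::ₘ Γ.map w :=
  (add_comm _ _).trans (Multiset.singleton_add _ _)

theorem mea_eq_map_add (Γ : Multiset IF) (Δ : Option IF) :
    mea (Γ, Δ) = Γ.map w + mea (0, Δ) := by
  simp [mea]

theorem DStep.mlt_mea {S T : DSeq} (h : DStep S T) : MLT (mea S) (mea T) := by
  cases h <;> simp only [mea_cons, mea_some, Multiset.map_cons]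
  case impL1 => exact (MLT.cons_of_lt (by simp only [w]; omega)).cons
  case impL4a Γ Δ _ _ _ =>
    rw [mea_eq_map_add Γ Δ, ← Multiset.cons_add]
    exact (MLT.cons_cons_of_lt (by simp only [w]; omega) (by simp only [w]; omega)).add_right _
  all_goals first
    | exact MLT.cons_of_lt (by simp only [w]; omega)
    | exact MLT.cons_cons_of_lt (by simp only [w]; omega) (by simp only [w]; omega)

/-- Dyckhoff's calculus is terminating: the Dershowitz-Manna
order on weight-multisets is well-founded, every premise of every rule instance
is strictly smaller than its conclusion in this order, and consequently
backward proof search terminates (the premise-of relation is well-founded). -/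
theorem dyckhoff_terminating :
    WellFounded MLT ∧
    (∀ S T : DSeq, DStep S T → MLT (mea S) (mea T)) ∧
    WellFounded DStep :=
  ⟨MLT_wf, fun _ _ => DStep.mlt_mea, Subrelation.wf DStep.mlt_mea (InvImage.wf mea MLT_wf)⟩
end

section
/- Let H be a single-conclusion sequent calculus extending FL_e, let S = (Γ₁, …, Γₙ ⇒ Δ) be derived from premises S₁ = (Γ₁ ⇒ Δ), S₂ = (Γ₂ ⇒), …, Sₙ = (Γₙ ⇒) which form a partition of S, and suppose p-free formulas E₂, …, Eₙ and F₁ satisfy H ⊢ Γᵢ ⇒ Eᵢ for i ≥ 2 and H ⊢ Γ₁, F₁ ⇒ Δ. Then H ⊢ Γ₁, …, Γₙ, (E₂ * ⋯ * Eₙ) → F₁ ⇒ Δ. -/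
/-- `E₂ * ⋯ * Eₙ` (right-nested), with the empty fusion being `1`. -/
def listFus : List Fm → Fm
  | [] => Fm.one
  | [a] => a
  | a :: b :: rest => Fm.fus a (listFus (b :: rest))

/-- The partition-disjunct lemma: if `H ⊢ Γᵢ ⇒ Eᵢ` for the
`p`-free formulas `E₂, …, Eₙ` and `H ⊢ Γ₁, F₁ ⇒ Δ` for the `p`-free `F₁`, then
`H ⊢ Γ₁, …, Γₙ, (E₂ * ⋯ * Eₙ) → F₁ ⇒ Δ`, in any calculus `H` extending `FL_e`. -/
theorem partition_disjunct_lemma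
    (H : Multiset Fm → Option Fm → Prop) (hH : IsFLe H) (p : Nat)
    (Γ₁ : Multiset Fm) (Δ : Option Fm) (F₁ : Fm)
    (l : List (Multiset Fm × Fm)) (hne : l ≠ [])
    (hpE : ∀ x ∈ l, pFree p x.2) (hpF : pFree p F₁)
    (hE : ∀ x ∈ l, H x.1 (some x.2))
    (hF : H (F₁ ::ₘ Γ₁) Δ) :
    H (Fm.imp (listFus (l.map Prod.snd)) F₁ ::ₘ (Γ₁ + (l.map Prod.fst).sum)) Δ := by
  have key : ∀ (l : List (Multiset Fm × Fm)), l ≠ [] →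
      (∀ x ∈ l, H x.1 (some x.2)) →
      H (l.map Prod.fst).sum (some (listFus (l.map Prod.snd))) := by
    intro l
    induction l with
    | nil => simp
    | cons a t ih =>
      intro _ hE
      cases t with
      | nil => simpa [listFus] using hE a (by simp)
      | cons b s =>
        have h1 := hE a (by simp)
        have h2 := ih (by simp) (fun x hx => hE x (by simp [hx]))
        simpa [listFus] using hH.fusR _ _ _ _ h1 h2
  rw [add_comm]
  exact hH.impL _ _ _ _ _ (key l hne hE) hF
end
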